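/- Let K be a field, n ≥ 1, and let σ_1, …, σ_{n+1} be the elementary symmetric polynomials in n+1 indeterminates v_1, …, v_{n+1} over K. Then the n elements σ_1, σ_2, …, σ_{n-1}, σ_n + σ_{n+1} are algebraically independent over K. -/

import Mathlib

open Polynomial MvPolynomial

/-- A finite matroid, presented by its ground set and rank function. -/
structure FinMatroid (α : Type) [DecidableEq α] where
  E : Finset α
  r : Finset α → ℕ

namespace FinMatroid
variable {α : Type} [DecidableEq α]

/-- The rank axioms for a matroid. -/
def Valid (M : FinMatroid α) : Prop :=
  M.r ∅ = 0 ∧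
  (∀ A, A ⊆ M.E → M.r A ≤ A.card) ∧
  (∀ A B, A ⊆ B → B ⊆ M.E → M.r A ≤ M.r B) ∧
  (∀ A B, A ⊆ M.E → B ⊆ M.E → M.r (A ∪ B) + M.r (A ∩ B) ≤ M.r A + M.r B)

/-- The rank `r(M) = r_M(E)` of the matroid. -/
def rank (M : FinMatroid α) : ℕ := M.r M.E

/-- A matroid is connected iff its ground set is nonempty and it admits no
nontrivial separation `E = A ∪ (E \ A)` with `r(A) + r(E \ A) = r(E)`. -/
def Connected (M : FinMatroid α) : Prop :=
  M.E.Nonempty ∧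
    ∀ A ⊆ M.E, A.Nonempty → A ≠ M.E → M.r A + M.r (M.E \ A) ≠ M.r M.E

/-- Deletion `M \ e`. -/
def delete (M : FinMatroid α) (e : α) : FinMatroid α :=
  ⟨M.E \ {e}, M.r⟩

/-- Contraction `M / e`, with rank function `A ↦ r(A ∪ {e}) - r({e})`. -/
def contract (M : FinMatroid α) (e : α) : FinMatroid α :=
  ⟨M.E \ {e}, fun A => M.r (A ∪ {e}) - M.r {e}⟩

/-- Restriction `M | C`. -/
def restrict (M : FinMatroid α) (C : Finset α) : FinMatroid α :=
  ⟨C, M.r⟩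

/-- The multivariate Tutte polynomial
`Ẑ_M(q, v) = ∑_{A ⊆ E} q^(r(M) - r_M(A)) ∏_{e ∈ A} v_e`,
as a polynomial in `q` over the polynomial ring `R[v]`. -/
noncomputable def Zhat (M : FinMatroid α) (R : Type) [CommRing R] :
    Polynomial (MvPolynomial α R) :=
  ∑ A ∈ M.E.powerset,
    Polynomial.C (∏ e ∈ A, MvPolynomial.X e) * Polynomial.X ^ (M.rank - M.r A)

/-- The multivariate Tutte polynomial viewed over the rational function field `K(v)`. -/
noncomputable def ZhatF (M : FinMatroid α) (K : Type) [Field K] :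
    Polynomial (FractionRing (MvPolynomial α K)) :=
  (Zhat M K).map (algebraMap (MvPolynomial α K) (FractionRing (MvPolynomial α K)))

end FinMatroid

/-- `galIsFullSymm p n` says that the Galois group of `p` is the full symmetric group
on the `n` roots of `p`: the action on the roots in the splitting field gives an
isomorphism onto the full permutation group of the roots, and there are `n` roots. -/
def galIsFullSymm {F : Type} [Field F] (p : Polynomial F) (n : ℕ) : Prop :=
  letI : Fact ((p.map (algebraMap F p.SplittingField)).Splits) :=
    ⟨Polynomial.SplittingField.splits p⟩
  Function.Bijective (Polynomial.Gal.galActionHom p p.SplittingField) ∧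
    Nat.card (p.rootSet p.SplittingField) = n

/-! Setting the last variable to `0` sends `σ_k` in `n + 1` variables to `σ_k` in `n` variables,
hence `σ_{n+1}` to `0`. So the given family specialises to `σ_1, …, σ_n` in `n` variables, which
are algebraically independent by the fundamental theorem of symmetric polynomials, and algebraic
independence lifts back along the specialisation. -/

lemma Multiset.esymm_zero_cons {R : Type*} [CommSemiring R] (s : Multiset R) (k : ℕ) :
    ((0 : R) ::ₘ s).esymm k = s.esymm k := by
  cases k with
  | zero => simp [Multiset.esymm]
  | succ k => simp [Multiset.esymm, Multiset.powersetCard_cons]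

namespace MvPolynomial

variable {σ R : Type*}

section CommSemiring

variable [CommSemiring R]

lemma esymm_eq_zero_of_card_lt [Fintype σ] {k : ℕ} (hk : Fintype.card σ < k) :
    esymm σ R k = 0 := by
  rw [esymm, Finset.powersetCard_eq_empty.2 (by simpa using hk), Finset.sum_empty]

lemma aeval_snoc_zero_esymm (n k : ℕ) :
    aeval (Fin.snoc X 0 : Fin (n + 1) → MvPolynomial (Fin n) R) (esymm (Fin (n + 1)) R k) =
      esymm (Fin n) R k := by
  rw [aeval_esymm_eq_multiset_esymm, esymm_eq_multiset_esymm, Fin.univ_castSuccEmb]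
  simp only [Finset.cons_val, Finset.map_val, Multiset.map_cons, Multiset.map_map,
    Function.comp_def, Fin.coe_castSuccEmb, Fin.snoc_last, Fin.snoc_castSucc]
  exact Multiset.esymm_zero_cons _ k

end CommSemiring

lemma algebraicIndependent_esymm [CommRing R] [Fintype σ] {n : ℕ}
    (hn : n ≤ Fintype.card σ) :
    AlgebraicIndependent R (fun i : Fin n => esymm σ R (i + 1)) := by
  rw [algebraicIndependent_iff_injective_aeval]
  intro p q hpq
  apply esymmAlgHom_injective R hn
  apply Subtype.val_injective
  simpa only [esymmAlgHom_apply] using hpq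

end MvPolynomial

theorem stmt_10_general (K : Type) [Field K] (n : ℕ) :
    AlgebraicIndependent K (fun i : Fin n =>
      if (i : ℕ) + 1 = n then
        MvPolynomial.esymm (Fin (n + 1)) K n + MvPolynomial.esymm (Fin (n + 1)) K (n + 1)
      else
        MvPolynomial.esymm (Fin (n + 1)) K ((i : ℕ) + 1)) := by
  apply AlgebraicIndependent.of_comp
    (MvPolynomial.aeval (Fin.snoc X 0 : Fin (n + 1) → MvPolynomial (Fin n) K))
  convert algebraicIndependent_esymm (σ := Fin n) (R := K) (Fintype.card_fin n).ge with i
  have hesymm_succ : esymm (Fin n) K (n + 1) = 0 := esymm_eq_zero_of_card_lt (by simp)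
  rw [Function.comp_apply]
  split_ifs with hi
  · rw [map_add, aeval_snoc_zero_esymm, aeval_snoc_zero_esymm, hesymm_succ, add_zero]
    exact congrArg _ hi.symm
  · exact aeval_snoc_zero_esymm n _

/-- the elements `σ₁, …, σ_{n-1}, σ_n + σ_{n+1}` of the polynomial ring
in `n+1` variables, where `σ_i` is the `i`-th elementary symmetric polynomial, are
algebraically independent over `K`. -/
theorem stmt_10 (K : Type) [Field K] (n : ℕ) (hn : 1 ≤ n) :
    AlgebraicIndependent K (fun i : Fin n =>
      if (i : ℕ) + 1 = n then
        MvPolynomial.esymm (Fin (n + 1)) K n + MvPolynomial.esymm (Fin (n + 1)) K (n + 1)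
      else
        MvPolynomial.esymm (Fin (n + 1)) K ((i : ℕ) + 1)) :=
  stmt_10_general K n
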